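/- In GF(3^m) with m ≡ 0 (mod 6), there exist distinct nonzero elements u, v in GF(3^m) such that 1 - u + v = 0 and 1 - u^4 + v^4 = 0. -/
import Mathlib


/-- In `GF(3^m)` with `6 ∣ m` (and `m` positive), there exist distinct nonzero elements
`u, v` with `1 - u + v = 0` and `1 - u^4 + v^4 = 0`. -/
theorem exists_weight_three_relation (m : ℕ) (hm : 0 < m) (h6 : 6 ∣ m) :
    ∃ u v : GaloisField 3 m, u ≠ 0 ∧ v ≠ 0 ∧ u ≠ v ∧
      1 - u + v = 0 ∧ 1 - u ^ 4 + v ^ 4 = 0 := by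
  haveI hp : Fact (Nat.Prime 3) := ⟨by norm_num⟩
  haveI := Fintype.ofFinite (GaloisField 3 m)
  have hcard : Fintype.card (GaloisField 3 m) = 3 ^ m := by
    rw [← Nat.card_eq_fintype_card]; exact GaloisField.card 3 m hm.ne'
  obtain ⟨k, hk⟩ : 2 ∣ m := dvd_trans ⟨3, rfl⟩ h6
  have hmod : Fintype.card (GaloisField 3 m) % 4 ≠ 3 := by
    rw [hcard, hk, pow_mul]
    have h9 : (3 ^ 2 : ℕ) ^ k % 4 = 1 % 4 := by
      rw [Nat.pow_mod]; norm_num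
    omega
  have hsq : IsSquare (-1 : GaloisField 3 m) :=
    (FiniteField.isSquare_neg_one_iff).2 hmod
  obtain ⟨y, hy⟩ := hsq
  have hy2 : y * y = -1 := hy.symm
  have hchar : (3 : GaloisField 3 m) = 0 := by
    exact_mod_cast CharP.cast_eq_zero (GaloisField 3 m) 3
  have h2 : (2 : GaloisField 3 m) ≠ 0 := by
    intro h
    exact one_ne_zero (by linear_combination hchar - h)
  have hyne : y ≠ 0 := by
    intro h
    rw [h] at hy2
    exact one_ne_zero (by linear_combination hy2)
  refine ⟨1 + y, y, ?_, hyne, ?_, by ring, ?_⟩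
  · intro h
    have hym : y = -1 := by linear_combination h
    rw [hym] at hy2
    exact h2 (by linear_combination hy2)
  · intro h
    exact one_ne_zero (by linear_combination h)
  · linear_combination (-6 - 4*y) * hy2 + 2 * hchar
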